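/- arXiv:2210.11834 — 4 statements merged into one kernel-verified Lean document; each statement's English description precedes it below -/
import Mathlib

section
/- Let d ≥ 1 and T ≥ 1 be integers and Z > 0 a real number. Let θ_1, …, θ_T ∈ ℝ^d satisfy ‖θ_t‖_∞ ≤ 1 for all t. Define lifted vectors θ̃_t = (θ_{t,1}, …, θ_{t,d}, 0) ∈ ℝ^{d+1}, set η = √(2 log(d+1) / T), and define exponentiated-gradient weights on the (d+1)-dimensional probability simplex by w_{1,i} = 1/(d+1) and w_{t+1,i} = w_{t,i} exp(−η θ̃_{t,i}) / Σ_{j=1}^{d+1} w_{t,j} exp(−η θ̃_{t,j}). Set λ_t = Z·(w_{t,1}, …, w_{t,d}) ∈ ℝ^d. Then λ_t ∈ Λ := {λ ∈ ℝ^d : λ_i ≥ 0 for all i, ‖λ‖_1 ≤ Z} for every t, and Σ_{t=1}^T ⟨θ_t, λ_t⟩ − min_{λ ∈ Λ} Σ_{t=1}^T ⟨θ_t, λ⟩ ≤ Z √(2 T log(d+1)). -/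
/-!
Lift `Λ` to `Z` times the simplex on `d + 1` coordinates, the last one a slack coordinate of zero
loss: the regret against any `μ ∈ Λ` is then a convex combination, with total mass `Z`, of the
regrets of exponential weights against single coordinates. For those, Hoeffding's lemma makes the
potential `Φ n = ∑ i, exp (-η L n i)` satisfy `Φ (n + 1) ≤ Φ n * exp (-η ⟪w n, ℓ n⟫ + η ^ 2 / 2)`,
and comparing `exp (-η L T j) ≤ Φ T` with `Φ 0 = d + 1` bounds the regret by
`log (d + 1) / η + T η / 2`, which the choice of `η` makes `√(2 T log (d + 1))`.
-/

open Finset Real ProbabilityTheory MeasureTheory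

theorem sum_mul_exp_le_exp_of_abs_le {ι : Type*} [Fintype ι] {p x : ι → ℝ}
    (hp : ∀ i, 0 ≤ p i) (hp1 : ∑ i, p i = 1) (hx : ∀ i, |x i| ≤ 1) (t : ℝ) :
    ∑ i, p i * exp (t * x i) ≤ exp (t * ∑ i, p i * x i + t ^ 2 / 2) := by
  let _ : MeasurableSpace ι := ⊤
  have _ : DiscreteMeasurableSpace ι := ⟨fun _ ↦ trivial⟩
  let P : PMF ι := PMF.ofFintype (fun i ↦ ENNReal.ofReal (p i)) (by
    rw [← ENNReal.ofReal_sum_of_nonneg fun i _ ↦ hp i, hp1, ENNReal.ofReal_one])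
  have hP (f : ι → ℝ) : ∫ i, f i ∂P.toMeasure = ∑ i, p i * f i := by
    simp [P, PMF.integral_eq_sum, hp]
  have hoeffding := (hasSubgaussianMGF_of_mem_Icc (X := x) (μ := P.toMeasure) (a := -1) (b := 1)
    (measurable_of_finite x).aemeasurable (ae_of_all _ fun i ↦ abs_le.1 (hx i))).mgf_le t
  have hnorm : ((‖(1 : ℝ) - -1‖₊ / 2) ^ 2 : NNReal) = 1 := by norm_num
  rw [hnorm, NNReal.coe_one, one_mul, mgf, hP, hP] at hoeffding
  set m := ∑ i, p i * x i
  calc ∑ i, p i * exp (t * x i) = exp (t * m) * ∑ i, p i * exp (t * (x i - m)) := by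
        rw [mul_sum]
        refine sum_congr rfl fun i _ ↦ ?_
        rw [mul_left_comm, ← exp_add]
        ring_nf
    _ ≤ exp (t * m) * exp (t ^ 2 / 2) := by gcongr
    _ = exp (t * m + t ^ 2 / 2) := (exp_add _ _).symm

noncomputable section ExponentialWeights

variable {ι : Type*}

def cumLoss (ℓ : ℕ → ι → ℝ) (n : ℕ) (i : ι) : ℝ := ∑ s ∈ range n, ℓ s i

@[simp]
lemma cumLoss_zero (ℓ : ℕ → ι → ℝ) (i : ι) : cumLoss ℓ 0 i = 0 := by simp [cumLoss]

lemma cumLoss_succ (ℓ : ℕ → ι → ℝ) (n : ℕ) (i : ι) :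
    cumLoss ℓ (n + 1) i = cumLoss ℓ n i + ℓ n i :=
  sum_range_succ _ _

variable [Fintype ι] (η : ℝ) (ℓ : ℕ → ι → ℝ)

def potential (n : ℕ) : ℝ := ∑ i, exp (-η * cumLoss ℓ n i)

def expWeights (n : ℕ) (i : ι) : ℝ := exp (-η * cumLoss ℓ n i) / potential η ℓ n

def expWeightsLoss (N : ℕ) : ℝ := ∑ n ∈ range N, ∑ i, expWeights η ℓ n i * ℓ n i

variable {η ℓ}

lemma potential_zero : potential η ℓ 0 = Fintype.card ι := by simp [potential]

lemma expWeights_zero (i : ι) : expWeights η ℓ 0 i = 1 / Fintype.card ι := by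
  simp [expWeights, potential_zero]

variable [Nonempty ι]

lemma potential_pos (n : ℕ) : 0 < potential η ℓ n :=
  sum_pos (fun _ _ ↦ exp_pos _) univ_nonempty

lemma expWeights_pos (n : ℕ) (i : ι) : 0 < expWeights η ℓ n i :=
  div_pos (exp_pos _) (potential_pos n)

lemma sum_expWeights (n : ℕ) : ∑ i, expWeights η ℓ n i = 1 := by
  simp only [expWeights]
  rw [← sum_div]
  exact div_self (potential_pos n).ne'

lemma potential_succ (n : ℕ) :
    potential η ℓ (n + 1) = potential η ℓ n * ∑ i, expWeights η ℓ n i * exp (-η * ℓ n i) := by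
  rw [mul_sum]
  refine sum_congr rfl fun i _ ↦ ?_
  rw [expWeights, ← mul_assoc, mul_div_cancel₀ _ (potential_pos n).ne', ← exp_add, cumLoss_succ,
    mul_add]

lemma expWeights_succ (n : ℕ) (i : ι) :
    expWeights η ℓ (n + 1) i =
      expWeights η ℓ n i * exp (-η * ℓ n i) / ∑ j, expWeights η ℓ n j * exp (-η * ℓ n j) := by
  rw [expWeights, potential_succ, cumLoss_succ ℓ, mul_add, exp_add, expWeights, div_mul_eq_mul_div,
    div_div]

lemma eq_expWeights_of_update {w : ℕ → ι → ℝ} {N : ℕ} (h0 : ∀ i, w 0 i = 1 / Fintype.card ι)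
    (hstep : ∀ n < N, ∀ i,
      w (n + 1) i = w n i * exp (-η * ℓ n i) / ∑ j, w n j * exp (-η * ℓ n j)) :
    ∀ n ≤ N, w n = expWeights η ℓ n := by
  intro n hn
  induction n with
  | zero => exact funext fun i ↦ by rw [h0, expWeights_zero]
  | succ n ih =>
    funext i
    rw [hstep n hn, ih (Nat.le_of_succ_le hn), expWeights_succ]

lemma potential_succ_le {n : ℕ} (hℓ : ∀ i, |ℓ n i| ≤ 1) :
    potential η ℓ (n + 1) ≤
      potential η ℓ n * exp (-η * ∑ i, expWeights η ℓ n i * ℓ n i + η ^ 2 / 2) := by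
  rw [potential_succ, ← neg_sq]
  exact mul_le_mul_of_nonneg_left
    (sum_mul_exp_le_exp_of_abs_le (fun i ↦ (expWeights_pos n i).le) (sum_expWeights n) hℓ (-η))
    (potential_pos n).le

lemma potential_le {N : ℕ} (hℓ : ∀ s < N, ∀ i, |ℓ s i| ≤ 1) :
    potential η ℓ N ≤ Fintype.card ι * exp (-η * expWeightsLoss η ℓ N + N * η ^ 2 / 2) := by
  induction N with
  | zero => simp [potential_zero, expWeightsLoss]
  | succ N ih =>
    calc potential η ℓ (N + 1)
        ≤ potential η ℓ N * exp (-η * ∑ i, expWeights η ℓ N i * ℓ N i + η ^ 2 / 2) :=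
          potential_succ_le (hℓ N N.lt_succ_self)
      _ ≤ Fintype.card ι * exp (-η * expWeightsLoss η ℓ N + N * η ^ 2 / 2) *
            exp (-η * ∑ i, expWeights η ℓ N i * ℓ N i + η ^ 2 / 2) := by
          gcongr
          exact ih fun s hs ↦ hℓ s (hs.trans N.lt_succ_self)
      _ = Fintype.card ι * exp (-η * expWeightsLoss η ℓ (N + 1) + (N + 1 : ℕ) * η ^ 2 / 2) := by
          rw [mul_assoc, ← exp_add]
          simp only [expWeightsLoss, sum_range_succ]
          push_cast
          ring_nf

theorem expWeightsLoss_sub_cumLoss_le (hη : 0 < η) {N : ℕ} (hℓ : ∀ s < N, ∀ i, |ℓ s i| ≤ 1)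
    (j : ι) :
    expWeightsLoss η ℓ N - cumLoss ℓ N j ≤ log (Fintype.card ι) / η + N * η / 2 := by
  have hexp : exp (-η * cumLoss ℓ N j) ≤
      exp (log (Fintype.card ι) + (-η * expWeightsLoss η ℓ N + N * η ^ 2 / 2)) := by
    rw [exp_add, exp_log (by exact_mod_cast Fintype.card_pos)]
    exact (single_le_sum (f := fun i ↦ exp (-η * cumLoss ℓ N i)) (fun i _ ↦ (exp_pos _).le)
      (mem_univ j)).trans (potential_le hℓ)
  rw [exp_le_exp] at hexp
  rw [div_add' _ _ _ hη.ne', le_div_iff₀ hη]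
  linarith

theorem expWeightsLoss_sub_cumLoss_le_sqrt (hι : 1 < Fintype.card ι) {N : ℕ} (hN : 0 < N)
    (hℓ : ∀ s < N, ∀ i, |ℓ s i| ≤ 1) (j : ι) :
    expWeightsLoss (√(2 * log (Fintype.card ι) / N)) ℓ N - cumLoss ℓ N j ≤
      √(2 * N * log (Fintype.card ι)) := by
  set a := log (Fintype.card ι)
  have ha : 0 < a := log_pos (by exact_mod_cast hι)
  have hN' : (0 : ℝ) < N := by exact_mod_cast hN
  set η := √(2 * a / N)
  have hη : 0 < η := sqrt_pos.2 (by positivity)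
  have hηsq : η ^ 2 = 2 * a / N := sq_sqrt (by positivity)
  have htuned : a / η + N * η / 2 = √(2 * N * a) := by
    rw [← sqrt_sq (by positivity : 0 ≤ a / η + N * η / 2)]
    congr 1
    field_simp
    rw [hηsq]
    field_simp
    ring
  exact htuned ▸ expWeightsLoss_sub_cumLoss_le hη hℓ j

end ExponentialWeights

lemma sum_mul_sub_sum_mul_le {ι : Type*} [Fintype ι] {q L : ι → ℝ} {P B : ℝ}
    (hq : ∀ j, 0 ≤ q j) (hB : ∀ j, P - L j ≤ B) :
    (∑ j, q j) * P - ∑ j, q j * L j ≤ (∑ j, q j) * B := by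
  rw [sum_mul, sum_mul, ← sum_sub_distrib]
  exact sum_le_sum fun j _ ↦ by rw [← mul_sub]; exact mul_le_mul_of_nonneg_left (hB j) (hq j)

section SlackLifting

variable {d T : ℕ} (θ : Fin T → Fin d → ℝ)

def slackLoss (s : ℕ) : Fin (d + 1) → ℝ :=
  if h : s < T then Fin.snoc (θ ⟨s, h⟩) 0 else 0

variable {θ}

lemma slackLoss_val (t : Fin T) : slackLoss θ t = Fin.snoc (θ t) 0 := dif_pos t.isLt

lemma abs_slackLoss_le (hθ : ∀ t i, |θ t i| ≤ 1) (s : ℕ) (j : Fin (d + 1)) :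
    |slackLoss θ s j| ≤ 1 := by
  unfold slackLoss
  split_ifs
  · induction j using Fin.lastCases with
    | last => simp
    | cast i => simpa using hθ _ i
  · simp

lemma cumLoss_slackLoss : cumLoss (slackLoss θ) T = Fin.snoc (fun i ↦ ∑ t, θ t i) 0 := by
  funext j
  rw [cumLoss, ← Fin.sum_univ_eq_sum_range (fun s ↦ slackLoss θ s j)]
  induction j using Fin.lastCases with
  | last => simp [slackLoss_val]
  | cast i => simp [slackLoss_val]

lemma sum_range_sum_mul_slackLoss (p : ℕ → Fin (d + 1) → ℝ) :
    ∑ n ∈ range T, ∑ j, p n j * slackLoss θ n j = ∑ t : Fin T, ∑ i, θ t i * p t i.castSucc := by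
  rw [← Fin.sum_univ_eq_sum_range (fun n ↦ ∑ j, p n j * slackLoss θ n j)]
  simp [slackLoss_val, Fin.sum_univ_castSucc, mul_comm]

lemma sum_mul_cumLoss_slackLoss (μ : Fin d → ℝ) (c : ℝ) :
    ∑ j, (Fin.snoc μ c : Fin (d + 1) → ℝ) j * cumLoss (slackLoss θ) T j = ∑ t, ∑ i, θ t i * μ i := by
  simp [cumLoss_slackLoss, Fin.sum_univ_castSucc, mul_sum, sum_comm (γ := Fin T), mul_comm]

lemma sum_castSucc_le_sum {p : Fin (d + 1) → ℝ} (hp : ∀ j, 0 ≤ p j) :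
    ∑ i : Fin d, p i.castSucc ≤ ∑ j, p j := by
  rw [Fin.sum_univ_castSucc]
  linarith [hp (Fin.last d)]

lemma mul_castSucc_nonneg_and_sum_abs_le {p : Fin (d + 1) → ℝ} (hp : ∀ j, 0 ≤ p j) (hp1 : ∑ j, p j = 1)
    {Z : ℝ} (hZ : 0 ≤ Z) :
    (∀ i : Fin d, 0 ≤ Z * p i.castSucc) ∧ ∑ i : Fin d, |Z * p i.castSucc| ≤ Z := by
  refine ⟨fun i ↦ mul_nonneg hZ (hp _), ?_⟩
  calc ∑ i : Fin d, |Z * p i.castSucc| = Z * ∑ i : Fin d, p i.castSucc := by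
        simp [abs_of_nonneg hZ, abs_of_nonneg (hp _), mul_sum]
    _ ≤ Z * 1 := by
        gcongr
        exact (sum_castSucc_le_sum hp).trans_eq hp1
    _ = Z := mul_one Z

lemma exists_snoc_nonneg_sum_eq {μ : Fin d → ℝ} (hμ : ∀ i, 0 ≤ μ i) {Z : ℝ}
    (hμZ : ∑ i, |μ i| ≤ Z) :
    ∃ c, (∀ j, 0 ≤ (Fin.snoc μ c : Fin (d + 1) → ℝ) j) ∧
      ∑ j, (Fin.snoc μ c : Fin (d + 1) → ℝ) j = Z := by
  refine ⟨Z - ∑ i, μ i, fun j ↦ ?_, by simp [Fin.sum_univ_castSucc]⟩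
  induction j using Fin.lastCases with
  | last => simpa [abs_of_nonneg (hμ _)] using hμZ
  | cast i => simpa using hμ i

end SlackLifting

/-- Exponentiated-gradient (online mirror descent) regret bound over the nonnegative
ℓ1-ball of radius `Z`, via lifting to the `(d+1)`-dimensional probability simplex. -/
theorem squareCBwK_exp_gradient_regret
    (d T : ℕ) (hd : 1 ≤ d) (hT : 1 ≤ T) (Z : ℝ) (hZ : 0 < Z)
    (θ : Fin T → Fin d → ℝ) (hθ : ∀ t i, |θ t i| ≤ 1)
    (θlift : Fin T → Fin (d + 1) → ℝ) (hθlift : ∀ t, θlift t = Fin.snoc (θ t) 0)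
    (η : ℝ) (hη : η = Real.sqrt (2 * Real.log (d + 1) / T))
    (w : ℕ → Fin (d + 1) → ℝ)
    (hw1 : ∀ i, w 1 i = 1 / (d + 1))
    (hwrec : ∀ t : Fin T, ∀ i, w (t.val + 2) i =
      w (t.val + 1) i * Real.exp (-η * θlift t i) /
        ∑ j, w (t.val + 1) j * Real.exp (-η * θlift t j))
    (lam : Fin T → Fin d → ℝ)
    (hlam : ∀ t i, lam t i = Z * w (t.val + 1) i.castSucc) :
    (∀ t : Fin T, (∀ i, 0 ≤ lam t i) ∧ (∑ i, |lam t i|) ≤ Z) ∧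
    (∀ μ : Fin d → ℝ, (∀ i, 0 ≤ μ i) → (∑ i, |μ i|) ≤ Z →
      (∑ t, ∑ i, θ t i * lam t i) - (∑ t, ∑ i, θ t i * μ i) ≤
        Z * Real.sqrt (2 * T * Real.log (d + 1))) := by
  obtain rfl : θlift = fun t ↦ Fin.snoc (θ t) 0 := funext hθlift
  have hcard : ((Fintype.card (Fin (d + 1)) : ℕ) : ℝ) = d + 1 := by simp
  have hw : ∀ n ≤ T, w (n + 1) = expWeights η (slackLoss θ) n :=
    eq_expWeights_of_update (by simpa [hcard] using hw1) fun n hn i ↦ by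
      simpa [slackLoss, hn] using hwrec ⟨n, hn⟩ i
  have hlam' : ∀ t i, lam t i = Z * expWeights η (slackLoss θ) t i.castSucc := fun t i ↦ by
    rw [hlam, hw t t.isLt.le]
  refine ⟨fun t ↦ ?_, fun μ hμ hμZ ↦ ?_⟩
  · simpa only [hlam'] using mul_castSucc_nonneg_and_sum_abs_le (fun j ↦ (expWeights_pos t j).le)
      (sum_expWeights t) hZ.le
  · have hregret := expWeightsLoss_sub_cumLoss_le_sqrt (by simp; omega) hT
      (fun s _ ↦ abs_slackLoss_le hθ s)
    rw [hcard, ← hη] at hregret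
    obtain ⟨c, hq, hqsum⟩ := exists_snoc_nonneg_sum_eq hμ hμZ
    have hmix := sum_mul_sub_sum_mul_le hq hregret
    rw [hqsum, sum_mul_cumLoss_slackLoss] at hmix
    convert hmix using 2
    rw [expWeightsLoss, sum_range_sum_mul_slackLoss, mul_sum]
    simp [hlam', mul_sum, mul_left_comm]
end

section
/- Let K ≥ 2 be an integer and γ > 0. Let ℓ̂, ℓ : {1, …, K} → ℝ be arbitrary functions, let b ∈ {1, …, K} be a maximizer of ℓ̂, and define the inverse-gap-weighting probabilities p_a = 1 / (K + γ(ℓ̂(b) − ℓ̂(a))) for a ≠ b and p_b = 1 − Σ_{a ≠ b} p_a. Then p is a probability vector with 0 < p_a ≤ 1/K for every a ≠ b and p_b ≥ 1/K, and for every a' ∈ {1, …, K}, Σ_{a=1}^K p_a (ℓ(a') − ℓ(a)) ≤ 2K/γ + (γ/2) Σ_{a=1}^K p_a (ℓ̂(a) − ℓ(a))². Consequently, for every probability vector q on {1, …, K}, Σ_{a'} q_{a'} ℓ(a') − Σ_a p_a ℓ(a) ≤ 2K/γ + (γ/2) Σ_a p_a (ℓ̂(a) − ℓ(a))². -/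
open Finset

/-- AM-GM style inequality: `x ≤ c x² + 1/(4c)` for `c > 0`. -/
lemma igw_amgm (x c : ℝ) (hc : 0 < c) : x ≤ c * x ^ 2 + 1 / (4 * c) := by
  have key : c * x ^ 2 + 1 / (4 * c) - x = (2 * c * x - 1) ^ 2 / (4 * c) := by
    field_simp
    ring
  have h2 : 0 ≤ (2 * c * x - 1) ^ 2 / (4 * c) := by positivity
  linarith

/-- Per-round exploration inequality for the inverse-gap-weighting distribution. -/
theorem inverse_gap_weighting_lemma
    (K : ℕ) (hK : 2 ≤ K) (γ : ℝ) (hγ : 0 < γ)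
    (lhat l : Fin K → ℝ) (b : Fin K) (hb : ∀ a, lhat a ≤ lhat b)
    (p : Fin K → ℝ)
    (hp : ∀ a, a ≠ b → p a = 1 / (K + γ * (lhat b - lhat a)))
    (hpb : p b = 1 - ∑ a ∈ Finset.univ.erase b, p a) :
    (∑ a, p a = 1) ∧
    (∀ a, a ≠ b → 0 < p a ∧ p a ≤ 1 / K) ∧
    (1 / K ≤ p b) ∧
    (∀ a' : Fin K, ∑ a, p a * (l a' - l a) ≤
      2 * K / γ + γ / 2 * ∑ a, p a * (lhat a - l a) ^ 2) ∧
    (∀ q : Fin K → ℝ, (∀ a, 0 ≤ q a) → (∑ a, q a = 1) →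
      (∑ a', q a' * l a') - (∑ a, p a * l a) ≤
        2 * K / γ + γ / 2 * ∑ a, p a * (lhat a - l a) ^ 2) := by
  have hK0 : (0:ℝ) < K := by
    have : (2:ℝ) ≤ K := by exact_mod_cast hK
    linarith
  have hΔ : ∀ a : Fin K, 0 ≤ lhat b - lhat a := fun a => sub_nonneg.2 (hb a)
  have hD : ∀ a : Fin K, (K:ℝ) ≤ K + γ * (lhat b - lhat a) := fun a =>
    le_add_of_nonneg_right (mul_nonneg hγ.le (hΔ a))
  have hDpos : ∀ a : Fin K, (0:ℝ) < K + γ * (lhat b - lhat a) := fun a => lt_of_lt_of_le hK0 (hD a)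
  have hppos : ∀ a, a ≠ b → 0 < p a := by
    intro a ha
    rw [hp a ha]
    exact one_div_pos.mpr (hDpos a)
  have hple : ∀ a, a ≠ b → p a ≤ 1 / K := by
    intro a ha
    rw [hp a ha]
    exact one_div_le_one_div_of_le hK0 (hD a)
  have hcard : (Finset.univ.erase b).card = K - 1 := by
    rw [Finset.card_erase_of_mem (mem_univ b), Finset.card_univ, Fintype.card_fin]
  have hcastK1 : ((K - 1 : ℕ) : ℝ) = (K:ℝ) - 1 := by
    have : 1 ≤ K := le_trans (by norm_num) hK
    push_cast [this]
    ring
  have hsum_erase : ∑ a ∈ Finset.univ.erase b, p a ≤ ((K:ℝ) - 1) * (1 / K) := by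
    have := Finset.sum_le_card_nsmul (Finset.univ.erase b) p (1 / K)
      (fun a ha => hple a (Finset.ne_of_mem_erase ha))
    rw [hcard, nsmul_eq_mul, hcastK1] at this
    exact this
  have hpb_ge : 1 / (K:ℝ) ≤ p b := by
    rw [hpb]
    have h1 : ((K:ℝ) - 1) * (1 / K) = 1 - 1 / K := by
      field_simp
    linarith
  have hpb_pos : 0 < p b := lt_of_lt_of_le (by positivity) hpb_ge
  have hpnonneg : ∀ a, 0 ≤ p a := by
    intro a
    by_cases ha : a = b
    · subst ha; exact hpb_pos.le
    · exact (hppos a ha).le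
  have hsum1 : ∑ a, p a = 1 := by
    rw [← Finset.add_sum_erase _ p (mem_univ b), hpb]
    ring
  -- bound on the gap-weighted sum T
  have hT : ∑ a, p a * (lhat b - lhat a) ≤ ((K:ℝ) - 1) * (1 / γ) := by
    rw [← Finset.add_sum_erase _ (fun a => p a * (lhat b - lhat a)) (mem_univ b)]
    have hb0 : p b * (lhat b - lhat b) = 0 := by ring
    have hbound : ∑ a ∈ Finset.univ.erase b, p a * (lhat b - lhat a) ≤ ((K:ℝ) - 1) * (1 / γ) := by
      have := Finset.sum_le_card_nsmul (Finset.univ.erase b)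
        (fun a => p a * (lhat b - lhat a)) (1 / γ) ?_
      · rw [hcard, nsmul_eq_mul, hcastK1] at this
        exact this
      · intro a ha
        have hab := Finset.ne_of_mem_erase ha
        rw [hp a hab, div_mul_eq_mul_div, one_mul, div_le_div_iff₀ (hDpos a) hγ]
        nlinarith [hΔ a]
    linarith
  -- bound E
  have hE : ∑ a, p a * (lhat a - l a) ≤
      γ / 4 * (∑ a, p a * (lhat a - l a) ^ 2) + 1 / γ := by
    have step : ∀ a : Fin K, p a * (lhat a - l a) ≤
        γ / 4 * (p a * (lhat a - l a) ^ 2) + p a * (1 / γ) := by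
      intro a
      have h := igw_amgm (lhat a - l a) (γ / 4) (by positivity)
      have h4 : 4 * (γ / 4) = γ := by ring
      rw [h4] at h
      nlinarith [hpnonneg a]
    calc ∑ a, p a * (lhat a - l a)
        ≤ ∑ a, (γ / 4 * (p a * (lhat a - l a) ^ 2) + p a * (1 / γ)) :=
          Finset.sum_le_sum (fun a _ => step a)
      _ = γ / 4 * (∑ a, p a * (lhat a - l a) ^ 2) + (∑ a, p a) * (1 / γ) := by
          rw [Finset.sum_add_distrib, ← Finset.mul_sum, ← Finset.sum_mul]
      _ = γ / 4 * (∑ a, p a * (lhat a - l a) ^ 2) + 1 / γ := by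
          rw [hsum1]; ring
  -- main per-comparator inequality
  have hmain : ∀ a' : Fin K, ∑ a, p a * (l a' - l a) ≤
      2 * K / γ + γ / 2 * ∑ a, p a * (lhat a - l a) ^ 2 := by
    intro a'
    have hpa' : 0 < p a' := by
      by_cases h : a' = b
      · subst h; exact hpb_pos
      · exact hppos a' h
    have hinv : 1 / (γ * p a') ≤ (K:ℝ) / γ + (lhat b - lhat a') := by
      by_cases h : a' = b
      · rw [h]
        simp only [sub_self, add_zero]
        have hfrac : γ / (K:ℝ) ≤ γ * p b := by
          have := mul_le_mul_of_nonneg_left hpb_ge hγ.le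
          calc γ / (K:ℝ) = γ * (1 / K) := by ring
            _ ≤ γ * p b := this
        have h1 : 1 / (γ * p b) ≤ 1 / (γ / K) :=
          one_div_le_one_div_of_le (by positivity) hfrac
        rwa [one_div_div] at h1
      · rw [hp a' h]
        rw [show γ * (1 / ((K:ℝ) + γ * (lhat b - lhat a'))) =
            γ / ((K:ℝ) + γ * (lhat b - lhat a')) by ring, one_div_div]
        have : ((K:ℝ) + γ * (lhat b - lhat a')) / γ = (K:ℝ) / γ + (lhat b - lhat a') := by
          field_simp
        rw [this]
    have hA : l a' - lhat a' ≤
        γ / 4 * (p a' * (lhat a' - l a') ^ 2) + ((K:ℝ) / γ + (lhat b - lhat a')) := by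
      have h := igw_amgm (l a' - lhat a') (γ * p a' / 4) (by positivity)
      have h4 : 4 * (γ * p a' / 4) = γ * p a' := by ring
      rw [h4] at h
      nlinarith [hinv]
    have hsingle : γ / 4 * (p a' * (lhat a' - l a') ^ 2) ≤
        γ / 4 * ∑ a, p a * (lhat a - l a) ^ 2 := by
      refine mul_le_mul_of_nonneg_left ?_ (by positivity)
      exact Finset.single_le_sum (f := fun a => p a * (lhat a - l a) ^ 2)
        (fun a _ => mul_nonneg (hpnonneg a) (sq_nonneg _)) (mem_univ a')
    have e1 : ∑ a, p a * (l a' - lhat a') = l a' - lhat a' := by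
      rw [← Finset.sum_mul, hsum1, one_mul]
    have e2 : ∑ a, p a * (lhat b - lhat a') = lhat b - lhat a' := by
      rw [← Finset.sum_mul, hsum1, one_mul]
    have key : ∑ a, p a * (l a' - l a) =
        (∑ a, p a * (l a' - lhat a')) +
        ((∑ a, p a * (lhat b - lhat a)) - ∑ a, p a * (lhat b - lhat a')) +
        ∑ a, p a * (lhat a - l a) := by
      rw [← Finset.sum_sub_distrib, ← Finset.sum_add_distrib, ← Finset.sum_add_distrib]
      exact Finset.sum_congr rfl fun a _ => by ring
    rw [key, e1, e2]
    have harith : (K:ℝ) / γ + ((K:ℝ) - 1) * (1 / γ) + 1 / γ = 2 * K / γ := by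
      field_simp
      ring
    linarith [hA, hT, hE, hsingle, harith]
  refine ⟨hsum1, fun a ha => ⟨hppos a ha, hple a ha⟩, hpb_ge, hmain, ?_⟩
  intro q hq hq1
  have hcenter : ∀ a' : Fin K, ∑ a, p a * (l a' - l a) = l a' - ∑ a, p a * l a := by
    intro a'
    simp_rw [mul_sub]
    rw [Finset.sum_sub_distrib, ← Finset.sum_mul, hsum1, one_mul]
  have hrw : (∑ a', q a' * l a') - (∑ a, p a * l a) =
      ∑ a', q a' * (∑ a, p a * (l a' - l a)) := by
    simp_rw [hcenter, mul_sub]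
    rw [Finset.sum_sub_distrib, ← Finset.sum_mul, hq1, one_mul]
  rw [hrw]
  calc ∑ a', q a' * (∑ a, p a * (l a' - l a))
      ≤ ∑ a' : Fin K, q a' * (2 * K / γ + γ / 2 * ∑ a, p a * (lhat a - l a) ^ 2) :=
        Finset.sum_le_sum (fun a' _ => mul_le_mul_of_nonneg_left (hmain a') (hq a'))
    _ = 2 * K / γ + γ / 2 * ∑ a, p a * (lhat a - l a) ^ 2 := by
        rw [← Finset.sum_mul, hq1, one_mul]
end

section
/- Let T ≥ 4 be an integer, 0 < δ < 1/e, and b > 0. Let (Ω, 𝓕, P) be a probability space with a filtration (𝓕_s)_{s=0}^T, and let M_1, …, M_T be random variables such that M_s is 𝓕_s-measurable and 0 ≤ M_s ≤ b almost surely for each s. Then with probability at least 1 − 2δ log T, simultaneously for every 1 ≤ t ≤ T, Σ_{s=1}^t E[M_s | 𝓕_{s−1}] ≤ 2 Σ_{s=1}^t M_s + 128 b log(1/δ). -/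
/-!
With `g s = E[M s | ℱ (s - 1)]`, the process `W t = exp (∑_{s ≤ t} (g s / (2b) - M s / b))` is a
nonnegative supermartingale started at `1`: on `[0, 1]` convexity gives
`exp (-u) ≤ 1 - (1 - e⁻¹) u`, and `1 - (1 - e⁻¹) u ≤ exp (-u / 2)` since `e⁻¹ ≤ 1 / 2`, so
`E[exp (-M s / b) | ℱ (s - 1)] ≤ exp (-g s / (2b))`. Ville's maximal inequality (optional stopping
at the first time `W ≥ e^x`) bounds the probability that `∑ g > 2 ∑ M + 2 b x` at some `t ≤ T`
by `e^{-x}`; with `x = 64 log (1/δ)` this is `δ^64 ≤ 2 δ log T`.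
-/

open MeasureTheory Finset

namespace Real

lemma exp_neg_le_one_sub_mul {u : ℝ} (h0 : 0 ≤ u) (h1 : u ≤ 1) :
    exp (-u) ≤ 1 - (1 - exp (-1)) * u := by
  have h := convexOn_exp.2 (Set.mem_univ 0) (Set.mem_univ (-1)) (sub_nonneg.2 h1) h0
    (sub_add_cancel 1 u)
  simp only [smul_eq_mul, mul_zero, zero_add, mul_neg, mul_one, exp_zero] at h
  linarith

lemma one_sub_mul_le_exp_neg_half {u : ℝ} (h0 : 0 ≤ u) :
    1 - (1 - exp (-1)) * u ≤ exp (-(u / 2)) := by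
  nlinarith [add_one_le_exp (-(u / 2)), exp_neg_one_lt_half]

end Real

open Real

section CondExp

variable {Ω : Type*} {m m0 : MeasurableSpace Ω} {μ : Measure Ω} [IsFiniteMeasure μ]

lemma ae_condExp_le_const (hm : m ≤ m0) {X : Ω → ℝ} {b : ℝ} (hX : Integrable X μ)
    (hXb : ∀ᵐ ω ∂μ, X ω ≤ b) : ∀ᵐ ω ∂μ, μ[X | m] ω ≤ b := by
  filter_upwards [condExp_mono (m := m) hX (integrable_const b) hXb] with ω hω
  rwa [condExp_const hm] at hω

lemma integrable_exp_neg_div {X : Ω → ℝ} {b : ℝ} (hb : 0 < b) (hX : AEMeasurable X μ)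
    (hX0 : ∀ᵐ ω ∂μ, 0 ≤ X ω) : Integrable (fun ω => exp (-(X ω / b))) μ := by
  refine .of_mem_Icc 0 1 (hX.div_const b).neg.exp ?_
  filter_upwards [hX0] with ω hω
  exact ⟨(exp_pos _).le, exp_le_one_iff.2 (neg_nonpos.2 (div_nonneg hω hb.le))⟩

lemma condExp_exp_neg_div_le (hm : m ≤ m0) {X : Ω → ℝ} {b : ℝ} (hb : 0 < b)
    (hX : AEMeasurable X μ) (hXb : ∀ᵐ ω ∂μ, 0 ≤ X ω ∧ X ω ≤ b) :
    μ[fun ω => exp (-(X ω / b)) | m] ≤ᵐ[μ] fun ω => exp (-(μ[X | m] ω / (2 * b))) := by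
  set c := 1 - exp (-1)
  have hXint : Integrable X μ := .of_mem_Icc 0 b hX hXb
  have hchord : (fun ω => exp (-(X ω / b))) ≤ᵐ[μ] (fun _ => (1 : ℝ)) - (c / b) • X := by
    filter_upwards [hXb] with ω hω
    have := exp_neg_le_one_sub_mul (div_nonneg hω.1 hb.le) ((div_le_one hb).2 hω.2)
    simp only [Pi.sub_apply, Pi.smul_apply, smul_eq_mul]
    convert this using 1
    ring
  filter_upwards [condExp_mono (m := m) (integrable_exp_neg_div hb hX (hXb.mono fun _ h => h.1))
      ((integrable_const 1).sub (hXint.smul (c / b))) hchord,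
    condExp_sub (integrable_const 1) (hXint.smul (c / b)) m, condExp_smul (c / b) X m,
    condExp_nonneg (m := m) (hXb.mono fun ω hω => hω.1)] with ω hmono hsub hsmul hnonneg
  rw [hsub, Pi.sub_apply, hsmul, condExp_const hm] at hmono
  calc _ ≤ 1 - c / b * μ[X | m] ω := hmono
    _ = 1 - c * (μ[X | m] ω / b) := by ring
    _ ≤ exp (-(μ[X | m] ω / b / 2)) := one_sub_mul_le_exp_neg_half (div_nonneg hnonneg hb.le)
    _ = exp (-(μ[X | m] ω / (2 * b))) := by rw [div_div, mul_comm]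

end CondExp

section FreedmanProcess

variable {Ω : Type*} {m0 : MeasurableSpace Ω} {μ : Measure Ω} {ℱ : Filtration ℕ m0}
  {M : ℕ → Ω → ℝ} {b : ℝ}

noncomputable def freedmanProcess (μ : Measure Ω) (ℱ : Filtration ℕ m0) (M : ℕ → Ω → ℝ) (b : ℝ)
    (t : ℕ) (ω : Ω) : ℝ :=
  exp (∑ s ∈ Icc 1 t, (μ[M s | ℱ (s - 1)] ω / (2 * b) - M s ω / b))

@[simp]
lemma freedmanProcess_zero : freedmanProcess μ ℱ M b 0 = 1 := by
  funext ω
  simp [freedmanProcess]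

lemma freedmanProcess_succ (t : ℕ) :
    freedmanProcess μ ℱ M b (t + 1) =
      (freedmanProcess μ ℱ M b t * fun ω => exp (μ[M (t + 1) | ℱ t] ω / (2 * b))) *
        fun ω => exp (-(M (t + 1) ω / b)) := by
  funext ω
  simp only [freedmanProcess, Pi.mul_apply, sum_Icc_succ_top (Nat.le_add_left 1 t),
    Nat.add_sub_cancel, ← exp_add]
  congr 1
  ring

lemma stronglyAdapted_freedmanProcess (hmeas : ∀ s, 1 ≤ s → Measurable[ℱ s] (M s)) :
    StronglyAdapted ℱ (freedmanProcess μ ℱ M b) := by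
  intro t
  refine (Measurable.exp (Finset.measurable_sum _ fun s hs => ?_)).stronglyMeasurable
  obtain ⟨h1s, hst⟩ := mem_Icc.1 hs
  exact ((stronglyMeasurable_condExp.mono (ℱ.mono (by omega))).measurable.div_const _).sub
    (((hmeas s h1s).mono (ℱ.mono hst) le_rfl).div_const _)

variable [IsFiniteMeasure μ]

lemma integrable_freedmanProcess (hb : 0 < b) (hmeas : ∀ s, 1 ≤ s → Measurable[ℱ s] (M s))
    (hbdd : ∀ s, 1 ≤ s → ∀ᵐ ω ∂μ, 0 ≤ M s ω ∧ M s ω ≤ b) (t : ℕ) :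
    Integrable (freedmanProcess μ ℱ M b t) μ := by
  have hsummand : ∀ s ∈ Icc 1 t,
      ∀ᵐ ω ∂μ, μ[M s | ℱ (s - 1)] ω / (2 * b) - M s ω / b ≤ 1 / 2 := by
    intro s hs
    have hs1 := (mem_Icc.1 hs).1
    have hMint : Integrable (M s) μ :=
      .of_mem_Icc 0 b ((hmeas s hs1).mono (ℱ.le s) le_rfl).aemeasurable (hbdd s hs1)
    filter_upwards [hbdd s hs1,
      ae_condExp_le_const (ℱ.le _) hMint ((hbdd s hs1).mono fun _ h => h.2)] with ω hM hg
    have : μ[M s | ℱ (s - 1)] ω / (2 * b) ≤ 1 / 2 := by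
      rw [div_le_iff₀ (by positivity)]
      linarith
    linarith [div_nonneg hM.1 hb.le]
  refine .of_mem_Icc 0 (exp (t / 2))
    ((stronglyAdapted_freedmanProcess hmeas t).measurable.mono (ℱ.le t) le_rfl).aemeasurable ?_
  filter_upwards [(Filter.eventually_all_finset _).2 hsummand] with ω hω
  refine ⟨(exp_pos _).le, exp_le_exp.2 ?_⟩
  calc _ ≤ ∑ s ∈ Icc 1 t, (1 / 2 : ℝ) := sum_le_sum hω
    _ = t / 2 := by simp [div_eq_mul_inv]

lemma condExp_freedmanProcess_succ_le (hb : 0 < b) (hmeas : ∀ s, 1 ≤ s → Measurable[ℱ s] (M s))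
    (hbdd : ∀ s, 1 ≤ s → ∀ᵐ ω ∂μ, 0 ≤ M s ω ∧ M s ω ≤ b) (t : ℕ) :
    μ[freedmanProcess μ ℱ M b (t + 1) | ℱ t] ≤ᵐ[μ] freedmanProcess μ ℱ M b t := by
  set A := freedmanProcess μ ℱ M b t * fun ω => exp (μ[M (t + 1) | ℱ t] ω / (2 * b))
  have hA : StronglyMeasurable[ℱ t] A :=
    ((stronglyAdapted_freedmanProcess hmeas t).measurable.mul
      (stronglyMeasurable_condExp.measurable.div_const _).exp).stronglyMeasurable
  have hM : AEMeasurable (M (t + 1)) μ :=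
    ((hmeas _ le_add_self).mono (ℱ.le _) le_rfl).aemeasurable
  have hbdd' := hbdd (t + 1) le_add_self
  have hAY := integrable_freedmanProcess hb hmeas hbdd (t + 1)
  rw [freedmanProcess_succ] at hAY ⊢
  filter_upwards [condExp_mul_of_stronglyMeasurable_left hA hAY
      (integrable_exp_neg_div hb hM (hbdd'.mono fun _ h => h.1)),
    condExp_exp_neg_div_le (ℱ.le t) hb hM hbdd'] with ω hpull hexp
  rw [hpull, Pi.mul_apply]
  calc _ ≤ A ω * exp (-(μ[M (t + 1) | ℱ t] ω / (2 * b))) :=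
        mul_le_mul_of_nonneg_left hexp (mul_pos (exp_pos _) (exp_pos _)).le
    _ = freedmanProcess μ ℱ M b t ω := by
        simp only [A, Pi.mul_apply, mul_assoc, ← exp_add, add_neg_cancel, exp_zero, mul_one]

lemma supermartingale_freedmanProcess (hb : 0 < b)
    (hmeas : ∀ s, 1 ≤ s → Measurable[ℱ s] (M s))
    (hbdd : ∀ s, 1 ≤ s → ∀ᵐ ω ∂μ, 0 ≤ M s ω ∧ M s ω ≤ b) :
    Supermartingale (freedmanProcess μ ℱ M b) ℱ μ :=
  supermartingale_nat (stronglyAdapted_freedmanProcess hmeas)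
    (integrable_freedmanProcess hb hmeas hbdd) (condExp_freedmanProcess_succ_le hb hmeas hbdd)

end FreedmanProcess

section Ville

variable {Ω : Type*} {m0 : MeasurableSpace Ω} {μ : Measure Ω} [IsFiniteMeasure μ]
  {ℱ : Filtration ℕ m0}

lemma MeasureTheory.Supermartingale.mul_measureReal_exists_le_le {W : ℕ → Ω → ℝ}
    (hW : Supermartingale W ℱ μ) (hW_nonneg : ∀ t ω, 0 ≤ W t ω) {ε : ℝ} (hε : 0 ≤ ε) (T : ℕ) :
    ε * μ.real {ω | ∃ t ≤ T, ε ≤ W t ω} ≤ ∫ ω, W 0 ω ∂μ := by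
  set τ : Ω → WithTop ℕ := fun ω => (hittingBtwn W (Set.Ici ε) 0 T ω : ℕ)
  have hτ : IsStoppingTime ℱ τ :=
    hW.stronglyAdapted.adapted.isStoppingTime_hittingBtwn measurableSet_Ici
  have hτT : ∀ ω, τ ω ≤ T := fun ω => WithTop.coe_le_coe.2 (hittingBtwn_le ω)
  have hstop : ∫ ω, stoppedValue W τ ω ∂μ ≤ ∫ ω, W 0 ω ∂μ := by
    have := hW.neg.expected_stoppedValue_mono (isStoppingTime_const ℱ 0) hτ
      (fun ω => WithTop.coe_le_coe.2 (Nat.zero_le _)) hτT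
    simpa [stoppedValue, integral_neg] using this
  calc ε * μ.real {ω | ∃ t ≤ T, ε ≤ W t ω}
      ≤ ε * μ.real {ω | ε ≤ stoppedValue W τ ω} := by
        refine mul_le_mul_of_nonneg_left (measureReal_mono ?_) hε
        rintro ω ⟨t, htT, ht⟩
        exact stoppedValue_hittingBtwn_mem ⟨t, ⟨Nat.zero_le t, htT⟩, ht⟩
    _ ≤ ∫ ω, stoppedValue W τ ω ∂μ :=
        mul_meas_ge_le_integral_of_nonneg (ae_of_all _ fun ω => hW_nonneg _ _)
          (integrable_stoppedValue ℕ hτ hW.integrable hτT) ε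
    _ ≤ ∫ ω, W 0 ω ∂μ := hstop

end Ville

lemma ofReal_one_sub_le_of_measureReal_compl_le {Ω : Type*} {m0 : MeasurableSpace Ω}
    {μ : Measure Ω} [IsProbabilityMeasure μ] {s : Set Ω} {p : ℝ} (h : μ.real sᶜ ≤ p) :
    ENNReal.ofReal (1 - p) ≤ μ s := by
  have := measureReal_union_le (μ := μ) s sᶜ
  rw [Set.union_compl_self, probReal_univ] at this
  exact ENNReal.ofReal_le_of_le_toReal (by rw [← measureReal_def]; linarith)

theorem measureReal_exists_sum_condExp_gt_le {Ω : Type*} {m0 : MeasurableSpace Ω}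
    {μ : Measure Ω} [IsProbabilityMeasure μ] {ℱ : Filtration ℕ m0} {M : ℕ → Ω → ℝ} {b : ℝ}
    (hb : 0 < b) (T : ℕ) (hmeas : ∀ s, 1 ≤ s → s ≤ T → Measurable[ℱ s] (M s))
    (hbdd : ∀ s, 1 ≤ s → s ≤ T → ∀ᵐ ω ∂μ, 0 ≤ M s ω ∧ M s ω ≤ b) (x : ℝ) :
    μ.real {ω | ∃ t ≤ T, 2 * ∑ s ∈ Icc 1 t, M s ω + 2 * b * x <
      ∑ s ∈ Icc 1 t, μ[M s | ℱ (s - 1)] ω} ≤ exp (-x) := by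
  -- Cutting `M` off after `T` leaves the sums up to `T` unchanged and makes `W` a supermartingale.
  set M' : ℕ → Ω → ℝ := fun s => if s ≤ T then M s else 0
  have hW : Supermartingale (freedmanProcess μ ℱ M' b) ℱ μ := by
    refine supermartingale_freedmanProcess hb (fun s hs => ?_) (fun s hs => ?_) <;>
      by_cases hsT : s ≤ T <;> simp only [M', hsT, if_true, if_false]
    · exact hmeas s hs hsT
    · exact measurable_const
    · exact hbdd s hs hsT
    · exact ae_of_all _ fun _ => ⟨le_rfl, hb.le⟩
  have hsub : {ω | ∃ t ≤ T, 2 * ∑ s ∈ Icc 1 t, M s ω + 2 * b * x <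
      ∑ s ∈ Icc 1 t, μ[M s | ℱ (s - 1)] ω} ⊆
      {ω | ∃ t ≤ T, exp x ≤ freedmanProcess μ ℱ M' b t ω} := by
    rintro ω ⟨t, htT, ht⟩
    refine ⟨t, htT, exp_le_exp.2 ?_⟩
    have hM' : ∀ s ∈ Icc 1 t, M' s = M s := fun s hs => if_pos ((mem_Icc.1 hs).2.trans htT)
    rw [sum_congr rfl fun s hs => by rw [hM' s hs], sum_sub_distrib, ← sum_div, ← sum_div,
      div_sub_div _ _ (by positivity) hb.ne', le_div_iff₀ (by positivity)]
    nlinarith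
  calc _ ≤ μ.real {ω | ∃ t ≤ T, exp x ≤ freedmanProcess μ ℱ M' b t ω} := measureReal_mono hsub
    _ = exp (-x) * (exp x * μ.real {ω | ∃ t ≤ T, exp x ≤ freedmanProcess μ ℱ M' b t ω}) := by
        rw [← mul_assoc, ← exp_add, neg_add_cancel, exp_zero, one_mul]
    _ ≤ exp (-x) := mul_le_of_le_one_right (exp_pos _).le <| by
        simpa using hW.mul_measureReal_exists_le_le (fun t ω => (exp_pos _).le) (exp_pos x).le T

/-- Uniform-in-time multiplicative Freedman corollary: the running sums of conditional
means of adapted, nonnegative, bounded variables are at most twice the realized running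
sums plus `128 b log(1/δ)`, with probability at least `1 - 2 δ log T`. -/
theorem freedman_multiplicative_uniform
    {Ω : Type*} {m0 : MeasurableSpace Ω} (μ : Measure Ω) [IsProbabilityMeasure μ]
    (T : ℕ) (hT : 4 ≤ T) (δ : ℝ) (hδ0 : 0 < δ) (hδ1 : δ < 1 / Real.exp 1)
    (b : ℝ) (hb : 0 < b)
    (ℱ : Filtration ℕ m0)
    (M : ℕ → Ω → ℝ)
    (hmeas : ∀ s, 1 ≤ s → s ≤ T → Measurable[ℱ s] (M s))
    (hbdd : ∀ s, 1 ≤ s → s ≤ T → ∀ᵐ ω ∂μ, 0 ≤ M s ω ∧ M s ω ≤ b) :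
    ENNReal.ofReal (1 - 2 * δ * Real.log T) ≤
      μ {ω | ∀ t, 1 ≤ t → t ≤ T →
        ∑ s ∈ Finset.Icc 1 t, (μ[M s | ℱ (s - 1)]) ω ≤
          2 * ∑ s ∈ Finset.Icc 1 t, M s ω + 128 * b * Real.log (1 / δ)} := by
  have hδ_le_one : δ ≤ 1 := hδ1.le.trans ((div_le_one (exp_pos 1)).2 (one_le_exp zero_le_one))
  have hlogT : 1 ≤ log T := (le_log_iff_exp_le (by positivity)).2
    (exp_one_lt_three.trans_le (by norm_cast; omega)).le
  have hexp : exp (-(64 * log (1 / δ))) = δ ^ 64 := by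
    rw [one_div, log_inv, mul_neg, neg_neg,
      show (64 : ℝ) * log δ = ((64 : ℕ) : ℝ) * log δ by norm_num, exp_nat_mul, exp_log hδ0]
  refine ofReal_one_sub_le_of_measureReal_compl_le <| (measureReal_mono ?_).trans <|
    (measureReal_exists_sum_condExp_gt_le hb T hmeas hbdd (64 * log (1 / δ))).trans ?_
  · intro ω hω
    simp only [Set.mem_compl_iff, Set.mem_ofPred_eq, not_forall, not_le] at hω
    obtain ⟨t, -, htT, ht⟩ := hω
    exact ⟨t, htT, by linarith⟩
  · rw [hexp]
    nlinarith [pow_le_of_le_one hδ0.le hδ_le_one (n := 64) (by norm_num)]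
end

section
/- Let (𝓕_t)_{t≥0} be a filtration on a probability space, let p ≥ 0, α ≥ 0 and B ≥ 1 be real numbers, and let (c_t)_{t≥1} and (I_t)_{t≥1} be sequences of random variables such that c_t and I_t are 𝓕_t-measurable, 0 ≤ c_t ≤ 1, I_t ∈ {0,1}, and E[c_t | 𝓕_{t−1}] ≥ (p + α) − α · E[I_t | 𝓕_{t−1}] almost everywhere for every t ≥ 1. Let τ = inf{t ≥ 1 : Σ_{s=1}^t c_s > B − 1}, and assume τ < ∞ almost surely and E[τ] < ∞. Then (p + α) · E[τ] ≤ B + α · E[Σ_{t=1}^τ I_t]. -/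
/-!
Let `X_n = ∑_{t ≤ n} (c_t + α I_t - (p + α))`. The drift hypothesis makes `X` a
submartingale, and `τ` coincides almost surely with the hitting time `σ` of `(B - 1, ∞)` by the
cumulative cost, a genuine stopping time. Optional stopping at the bounded time `min σ N` gives
`0 ≤ E[X_{min τ N}]`; pathwise, the cost paid up to `τ` is at most `B` since the last round
costs at most `1`, so `(p + α) E[min τ N] ≤ B + α E[∑_{t ≤ τ} I_t]`. Let `N → ∞` by monotone
convergence.
-/

open MeasureTheory Finset Filter Topology

theorem sum_Icc_sInf_le_add {x : ℕ → ℝ} {K b : ℝ} (hK : 0 ≤ K) (hx : ∀ t, 1 ≤ t → x t ≤ b)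
    (hcross : ∃ t, 1 ≤ t ∧ K < ∑ s ∈ Icc 1 t, x s) :
    ∑ s ∈ Icc 1 (sInf {t | 1 ≤ t ∧ K < ∑ s ∈ Icc 1 t, x s}), x s ≤ K + b := by
  obtain ⟨m, hm⟩ : ∃ m, sInf {t | 1 ≤ t ∧ K < ∑ s ∈ Icc 1 t, x s} = m + 1 :=
    ⟨_, (Nat.succ_pred_eq_of_pos (Nat.sInf_mem hcross).1).symm⟩
  have hprefix : ∑ s ∈ Icc 1 m, x s ≤ K := by
    rcases Nat.eq_zero_or_pos m with rfl | hm_pos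
    · simpa using hK
    · exact not_lt.1 fun h => Nat.notMem_of_lt_sInf (s := {t | 1 ≤ t ∧ K < ∑ s ∈ Icc 1 t, x s})
        (by omega) ⟨hm_pos, h⟩
  rw [hm, sum_Icc_succ_top (by omega)]
  linarith [hx (m + 1) (by omega)]

theorem sum_Icc_add_mul_sub_le {c I : ℕ → ℝ} {q α B : ℝ} (hα : 0 ≤ α) {n T : ℕ} (hnT : n ≤ T)
    (hc : ∀ t, 1 ≤ t → 0 ≤ c t) (hI : ∀ t, 1 ≤ t → 0 ≤ I t) (hbudget : ∑ t ∈ Icc 1 T, c t ≤ B) :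
    ∑ t ∈ Icc 1 n, (c t + α * I t - q) ≤ B + α * ∑ t ∈ Icc 1 T, I t - q * n := by
  have hsub : Icc 1 n ⊆ Icc 1 T := Icc_subset_Icc_right hnT
  have hcn : ∑ t ∈ Icc 1 n, c t ≤ ∑ t ∈ Icc 1 T, c t :=
    sum_le_sum_of_subset_of_nonneg hsub fun t ht _ => hc t (mem_Icc.1 ht).1
  have hIn : ∑ t ∈ Icc 1 n, I t ≤ ∑ t ∈ Icc 1 T, I t :=
    sum_le_sum_of_subset_of_nonneg hsub fun t ht _ => hI t (mem_Icc.1 ht).1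
  rw [sum_sub_distrib, sum_add_distrib, ← mul_sum, sum_const, Nat.card_Icc, nsmul_eq_mul,
    add_tsub_cancel_right]
  nlinarith

namespace MeasureTheory

variable {Ω : Type*} {m0 : MeasurableSpace Ω} {μ : Measure Ω}

section HittingTime

variable {ι β : Type*} {u : ι → Ω → β} {s : Set β} {n : ι}

theorem hittingAfter_eq_coe_sInf [Preorder ι] [InfSet ι] {ω : Ω} (h : ∃ j, n ≤ j ∧ u j ω ∈ s) :
    hittingAfter u s n ω = sInf {i | n ≤ i ∧ u i ω ∈ s} := by
  classical
  rw [hittingAfter_def]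
  exact if_pos h

theorem untopD_hittingAfter [Preorder ι] [InfSet ι] (ω : Ω) :
    (hittingAfter u s n ω).untopD (sInf ∅) = sInf {i | n ≤ i ∧ u i ω ∈ s} := by
  classical
  by_cases h : ∃ j, n ≤ j ∧ u j ω ∈ s
  · rw [hittingAfter_eq_coe_sInf h, WithTop.untopD_coe]
  · have hempty : {i | n ≤ i ∧ u i ω ∈ s} = ∅ :=
      Set.eq_empty_of_forall_notMem fun i hi => h ⟨i, hi⟩
    simp only [hittingAfter_def, if_neg h, WithTop.untopD_top, hempty]

theorem stoppedValue_min_hittingAfter [ConditionallyCompleteLinearOrder ι] {γ : Type*}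
    (X : ι → Ω → γ) (N : ι) {ω : Ω} (h : ∃ j, n ≤ j ∧ u j ω ∈ s) :
    stoppedValue X (fun ω => min (hittingAfter u s n ω) N) ω
      = X (min (sInf {i | n ≤ i ∧ u i ω ∈ s}) N) ω := by
  rw [stoppedValue, hittingAfter_eq_coe_sInf h, ← WithTop.coe_min]
  rfl

theorem Adapted.measurable_sInf_setOf_le_and_mem [MeasurableSpace β] {ℱ : Filtration ℕ m0}
    {u : ℕ → Ω → β} {n : ℕ} (hu : Adapted ℱ u) (hs : MeasurableSet s) :
    Measurable fun ω => sInf {i | n ≤ i ∧ u i ω ∈ s} := by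
  have hσ := hu.isStoppingTime_hittingAfter (n := n) hs
  simp_rw [← untopD_hittingAfter]
  exact (measurable_of_countable _).comp (hσ.measurable.mono hσ.measurableSpace_le le_rfl)

end HittingTime

theorem condExp_add_mul_sub_const_nonneg [IsFiniteMeasure μ] {m : MeasurableSpace Ω}
    (hm : m ≤ m0) {f g : Ω → ℝ} (hf : Integrable f μ) (hg : Integrable g μ) {a b : ℝ}
    (h : ∀ᵐ ω ∂μ, a - b * μ[g | m] ω ≤ μ[f | m] ω) :
    0 ≤ᵐ[μ] μ[fun ω => f ω + b * g ω - a | m] := by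
  have hlin : μ[fun ω => f ω + b * g ω - a | m] =ᵐ[μ] μ[f | m] + b • μ[g | m] - fun _ => a := by
    have hfun : (fun ω => f ω + b * g ω - a) = f + b • g - fun _ => a := rfl
    filter_upwards [condExp_sub (m := m) (hf.add (hg.smul b)) (integrable_const a),
      condExp_add hf (hg.smul b) m, condExp_smul b g m] with ω h1 h2 h3
    rw [hfun, h1, Pi.sub_apply, h2, Pi.add_apply, h3, condExp_const hm]
    rfl
  filter_upwards [hlin, h] with ω hω hω'
  rw [hω]
  simp only [Pi.add_apply, Pi.sub_apply, Pi.smul_apply, smul_eq_mul, Pi.zero_apply]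
  linarith

theorem submartingale_sum_Icc [IsFiniteMeasure μ] {ℱ : Filtration ℕ m0} {ξ : ℕ → Ω → ℝ}
    (hmeas : ∀ t, 1 ≤ t → StronglyMeasurable[ℱ t] (ξ t))
    (hint : ∀ t, 1 ≤ t → Integrable (ξ t) μ)
    (hdrift : ∀ t, 1 ≤ t → 0 ≤ᵐ[μ] μ[ξ t | ℱ (t - 1)]) :
    Submartingale (fun n => ∑ t ∈ Icc 1 n, ξ t) ℱ μ := by
  refine submartingale_of_condExp_sub_nonneg_nat (fun n => ?_) (fun n => ?_) fun n => ?_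
  · exact Finset.stronglyMeasurable_sum _ fun t ht =>
      (hmeas t (mem_Icc.1 ht).1).mono (ℱ.mono (mem_Icc.1 ht).2)
  · exact integrable_finsetSum' _ fun t ht => hint t (mem_Icc.1 ht).1
  · simpa [sum_Icc_succ_top] using hdrift (n + 1) (by omega)

theorem submartingale_sum_Icc_add_mul_sub_const [IsFiniteMeasure μ] {ℱ : Filtration ℕ m0}
    {f g : ℕ → Ω → ℝ} {a b : ℝ} (hf : ∀ t, 1 ≤ t → Measurable[ℱ t] (f t))
    (hg : ∀ t, 1 ≤ t → Measurable[ℱ t] (g t)) (hf_int : ∀ t, 1 ≤ t → Integrable (f t) μ)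
    (hg_int : ∀ t, 1 ≤ t → Integrable (g t) μ)
    (hdrift : ∀ t, 1 ≤ t → ∀ᵐ ω ∂μ, a - b * μ[g t | ℱ (t - 1)] ω ≤ μ[f t | ℱ (t - 1)] ω) :
    Submartingale (fun n => ∑ t ∈ Icc 1 n, fun ω => f t ω + b * g t ω - a) ℱ μ :=
  submartingale_sum_Icc
    (fun t ht => (((hf t ht).add ((hg t ht).const_mul b)).sub_const a).stronglyMeasurable)
    (fun t ht => ((hf_int t ht).add ((hg_int t ht).const_mul b)).sub (integrable_const a))
    fun t ht => condExp_add_mul_sub_const_nonneg (ℱ.le _) (hf_int t ht) (hg_int t ht) (hdrift t ht)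

theorem Submartingale.mul_integral_le_of_stoppedValue_le [IsProbabilityMeasure μ]
    {ℱ : Filtration ℕ m0} {X : ℕ → Ω → ℝ} (hX : Submartingale X ℱ μ) (hX0 : X 0 = 0)
    {π : Ω → ℕ∞} (hπ : IsStoppingTime ℱ π) {N : ℕ} (hbdd : ∀ ω, π ω ≤ N) {F G : Ω → ℝ}
    (hF : Integrable F μ) (hG : Integrable G μ) {B α q : ℝ}
    (h : ∀ᵐ ω ∂μ, stoppedValue X π ω ≤ B + α * F ω - q * G ω) :
    q * ∫ ω, G ω ∂μ ≤ B + α * ∫ ω, F ω ∂μ := by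
  have hstart :=
    hX.expected_stoppedValue_mono (isStoppingTime_const ℱ 0) hπ (fun _ => bot_le) hbdd
  rw [stoppedValue_const, hX0] at hstart
  have hBF : Integrable (fun ω => B + α * F ω) μ := (integrable_const B).add (hF.const_mul α)
  have hend := integral_mono_ae (g := fun ω => B + α * F ω - q * G ω)
    (hX.integrable_stoppedValue hπ hbdd) (hBF.sub (hG.const_mul q)) h
  rw [integral_sub hBF (hG.const_mul q), integral_add (integrable_const B) (hF.const_mul α),
    integral_const, integral_const_mul, integral_const_mul, probReal_univ, one_smul] at hend
  simp only [Pi.zero_apply, integral_zero] at hstart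
  linarith

theorem integrable_min_natCast {τ : Ω → ℕ} (hint : Integrable (fun ω => (τ ω : ℝ)) μ) (N : ℕ) :
    Integrable (fun ω => (min (τ ω) N : ℝ)) μ := by
  refine hint.mono (hint.1.inf aestronglyMeasurable_const) (ae_of_all _ fun ω => ?_)
  rw [Real.norm_of_nonneg (Nat.cast_nonneg _),
    Real.norm_of_nonneg (le_min (Nat.cast_nonneg (τ ω)) (Nat.cast_nonneg N))]
  exact min_le_left _ _

theorem tendsto_integral_min_natCast {τ : Ω → ℕ} (hint : Integrable (fun ω => (τ ω : ℝ)) μ) :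
    Tendsto (fun N : ℕ => ∫ ω, (min (τ ω) N : ℝ) ∂μ) atTop (𝓝 (∫ ω, (τ ω : ℝ) ∂μ)) := by
  refine integral_tendsto_of_tendsto_of_monotone (integrable_min_natCast hint) hint ?_ ?_
  · exact ae_of_all _ fun ω N N' hN => min_le_min_left _ (by exact_mod_cast hN)
  · exact ae_of_all _ fun ω => tendsto_atTop_of_eventually_const (i₀ := τ ω) fun N hN =>
      min_eq_left (by exact_mod_cast hN)

theorem integrable_sum_Icc_of_norm_le {τ : Ω → ℕ} (hτ : Measurable τ)
    (hint : Integrable (fun ω => (τ ω : ℝ)) μ) {f : ℕ → Ω → ℝ} {C : ℝ}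
    (hf : ∀ t, 1 ≤ t → Measurable (f t)) (hbdd : ∀ᵐ ω ∂μ, ∀ t, 1 ≤ t → ‖f t ω‖ ≤ C) :
    Integrable (fun ω => ∑ t ∈ Icc 1 (τ ω), f t ω) μ := by
  have hmeas : Measurable fun ω => ∑ t ∈ Icc 1 (τ ω), f t ω :=
    (measurable_from_prod_countable_left (f := fun q : Ω × ℕ => ∑ t ∈ Icc 1 q.2, f t q.1)
      fun n => Finset.measurable_sum _ fun t ht => hf t (mem_Icc.1 ht).1).comp
      (measurable_id.prodMk hτ)
  refine (hint.const_mul C).mono' hmeas.aestronglyMeasurable ?_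
  filter_upwards [hbdd] with ω hω
  calc ‖∑ t ∈ Icc 1 (τ ω), f t ω‖ ≤ ∑ t ∈ Icc 1 (τ ω), C :=
        (norm_sum_le _ _).trans (sum_le_sum fun t ht => hω t (mem_Icc.1 ht).1)
    _ = C * τ ω := by simp [mul_comm]

end MeasureTheory

theorem optional_stopping_budget_bound_general
    {Ω : Type*} {m0 : MeasurableSpace Ω} (μ : Measure Ω) [IsProbabilityMeasure μ]
    (ℱ : Filtration ℕ m0) (p α B : ℝ) (hα : 0 ≤ α) (hB : 1 ≤ B)
    (c I : ℕ → Ω → ℝ)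
    (hcmeas : ∀ t, 1 ≤ t → Measurable[ℱ t] (c t))
    (hImeas : ∀ t, 1 ≤ t → Measurable[ℱ t] (I t))
    (hcbdd : ∀ t, 1 ≤ t → ∀ᵐ ω ∂μ, c t ω ∈ Set.Icc (0 : ℝ) 1)
    (hI01 : ∀ t, 1 ≤ t → ∀ᵐ ω ∂μ, I t ω = 0 ∨ I t ω = 1)
    (hdrift : ∀ t, 1 ≤ t → ∀ᵐ ω ∂μ,
      (p + α) - α * (μ[I t | ℱ (t - 1)]) ω ≤ (μ[c t | ℱ (t - 1)]) ω)
    (τ : Ω → ℕ)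
    (hτ : ∀ ω, τ ω = sInf {t | 1 ≤ t ∧ B - 1 < ∑ s ∈ Finset.Icc 1 t, c s ω})
    (hfin : ∀ᵐ ω ∂μ, ∃ t, 1 ≤ t ∧ B - 1 < ∑ s ∈ Finset.Icc 1 t, c s ω)
    (hint : Integrable (fun ω => (τ ω : ℝ)) μ) :
    (p + α) * ∫ ω, (τ ω : ℝ) ∂μ ≤
      B + α * ∫ ω, ∑ s ∈ Finset.Icc 1 (τ ω), I s ω ∂μ := by
  have hc : ∀ᵐ ω ∂μ, ∀ t, 1 ≤ t → c t ω ∈ Set.Icc (0 : ℝ) 1 :=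
    (ae_ball_iff (S := {t | 1 ≤ t}) (Set.to_countable _)).2 hcbdd
  have hI : ∀ᵐ ω ∂μ, ∀ t, 1 ≤ t → I t ω ∈ Set.Icc (0 : ℝ) 1 :=
    (ae_ball_iff (S := {t | 1 ≤ t}) (Set.to_countable _)).2 fun t ht =>
      (hI01 t ht).mono fun ω h => by rcases h with h | h <;> simp [h]
  have hI_meas : ∀ t, 1 ≤ t → Measurable (I t) := fun t ht => (hImeas t ht).mono (ℱ.le t) le_rfl
  have hc_int : ∀ t, 1 ≤ t → Integrable (c t) μ := fun t ht =>
    .of_mem_Icc 0 1 ((hcmeas t ht).mono (ℱ.le t) le_rfl).aemeasurable (hcbdd t ht)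
  have hI_int : ∀ t, 1 ≤ t → Integrable (I t) μ := fun t ht =>
    .of_mem_Icc 0 1 (hI_meas t ht).aemeasurable (hI.mono fun ω h => h t ht)
  have hcost : Adapted ℱ fun n ω => ∑ s ∈ Icc 1 n, c s ω := fun n =>
    Finset.measurable_sum _ fun s hs =>
      (hcmeas s (mem_Icc.1 hs).1).mono (ℱ.mono (mem_Icc.1 hs).2) le_rfl
  have hσ := hcost.isStoppingTime_hittingAfter (n := 1) (measurableSet_Ioi (a := B - 1))
  have hτ_meas : Measurable τ :=
    funext hτ ▸ hcost.measurable_sInf_setOf_le_and_mem measurableSet_Ioi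
  have hX := submartingale_sum_Icc_add_mul_sub_const hcmeas hImeas hc_int hI_int hdrift
  refine le_of_tendsto' ((tendsto_integral_min_natCast hint).const_mul (p + α)) fun N => ?_
  refine hX.mul_integral_le_of_stoppedValue_le (by simp) (hσ.min_const N)
    (fun _ => min_le_right _ _)
    (integrable_sum_Icc_of_norm_le hτ_meas hint hI_meas
      (hI.mono fun ω h t ht => by rw [Real.norm_of_nonneg (h t ht).1]; exact (h t ht).2))
    (integrable_min_natCast hint N) ?_
  filter_upwards [hfin, hc, hI] with ω hω hcω hIω
  have hbudget : ∑ s ∈ Icc 1 (τ ω), c s ω ≤ B := by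
    have := sum_Icc_sInf_le_add (sub_nonneg.2 hB) (fun t ht => (hcω t ht).2) hω
    rw [hτ ω]; linarith
  rw [stoppedValue_min_hittingAfter (u := fun n ω => ∑ s ∈ Icc 1 n, c s ω)
    (s := Set.Ioi (B - 1)) _ N hω]
  simp only [Set.mem_Ioi]
  rw [← hτ ω, Finset.sum_apply, ← Nat.cast_min]
  exact sum_Icc_add_mul_sub_le hα (min_le_left _ _) (fun t ht => (hcω t ht).1)
    (fun t ht => (hIω t ht).1) hbudget

/-- Optional-stopping upper bound on the expected budget-exhaustion time: every round
costs at least `p + α` in conditional expectation unless the indicated (cheap) arm is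
pulled, so `(p + α) E[τ] ≤ B + α E[Σ_{t ≤ τ} I_t]`. -/
theorem optional_stopping_budget_bound
    {Ω : Type*} {m0 : MeasurableSpace Ω} (μ : Measure Ω) [IsProbabilityMeasure μ]
    (ℱ : Filtration ℕ m0) (p α B : ℝ) (hp : 0 ≤ p) (hα : 0 ≤ α) (hB : 1 ≤ B)
    (c I : ℕ → Ω → ℝ)
    (hcmeas : ∀ t, 1 ≤ t → Measurable[ℱ t] (c t))
    (hImeas : ∀ t, 1 ≤ t → Measurable[ℱ t] (I t))
    (hcbdd : ∀ t, 1 ≤ t → ∀ᵐ ω ∂μ, c t ω ∈ Set.Icc (0 : ℝ) 1)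
    (hI01 : ∀ t, 1 ≤ t → ∀ᵐ ω ∂μ, I t ω = 0 ∨ I t ω = 1)
    (hdrift : ∀ t, 1 ≤ t → ∀ᵐ ω ∂μ,
      (p + α) - α * (μ[I t | ℱ (t - 1)]) ω ≤ (μ[c t | ℱ (t - 1)]) ω)
    (τ : Ω → ℕ)
    (hτ : ∀ ω, τ ω = sInf {t | 1 ≤ t ∧ B - 1 < ∑ s ∈ Finset.Icc 1 t, c s ω})
    (hfin : ∀ᵐ ω ∂μ, ∃ t, 1 ≤ t ∧ B - 1 < ∑ s ∈ Finset.Icc 1 t, c s ω)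
    (hint : Integrable (fun ω => (τ ω : ℝ)) μ) :
    (p + α) * ∫ ω, (τ ω : ℝ) ∂μ ≤
      B + α * ∫ ω, ∑ s ∈ Finset.Icc 1 (τ ω), I s ω ∂μ :=
  optional_stopping_budget_bound_general μ ℱ p α B hα hB c I hcmeas hImeas hcbdd hI01 hdrift τ hτ
    hfin hint
end
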